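/- Homological perturbation lemma: let (h, i, p) be a contraction for a differential d on C, with induced differential p d i on D. Let d' be another differential on C and set δ = d' - d. If 1 + δ h is invertible, then h' = h (1 + δ h)⁻¹, i' = (1 + h δ)⁻¹ i, p' = p (1 + δ h)⁻¹ form a contraction for d', i.e., (h')² = 0, h' d' h' = h', p' i' = 1, i' p' = 1 - d' h' - h' d'. -/
import Mathlib


/-- Homological Perturbation Lemma: let `(h, i, p)` be a
contraction for the differential `d` on `C`, let `d'` be another differential
and `δ = d' - d`.  If `1 + δ h` is invertible, with two-sided inverse `u`
(and `w` the two-sided inverse of `1 + h δ`), then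
`h' = h u`, `i' = w ∘ i`, `p' = p ∘ u` form a contraction for `d'`:
`(h')² = 0`, `h' d' h' = h'`, `p' ∘ i' = 1`, `i' ∘ p' = 1 - d' h' - h' d'`. -/
theorem stmt_3 {R : Type*} [CommRing R] {C D : Type*}
    [AddCommGroup C] [Module R C] [AddCommGroup D] [Module R D]
    (d d' h : Module.End R C) (i : D →ₗ[R] C) (p : C →ₗ[R] D)
    (hd2 : d * d = 0) (hd'2 : d' * d' = 0)
    (hh2 : h * h = 0) (hhdh : h * d * h = h)
    (hpi : p ∘ₗ i = LinearMap.id)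
    (hip : i ∘ₗ p = 1 - d * h - h * d)
    (u w : Module.End R C)
    (hu1 : (1 + (d' - d) * h) * u = 1) (hu2 : u * (1 + (d' - d) * h) = 1)
    (hw1 : (1 + h * (d' - d)) * w = 1) (hw2 : w * (1 + h * (d' - d)) = 1) :
    (h * u) * (h * u) = 0 ∧
    (h * u) * d' * (h * u) = h * u ∧
    (p ∘ₗ u) ∘ₗ (w ∘ₗ i) = LinearMap.id ∧
    (w ∘ₗ i) ∘ₗ (p ∘ₗ u) = 1 - d' * (h * u) - (h * u) * d' := by
  -- basic pointwise consequence of `hpi`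
  have hpix : ∀ x : D, p (i x) = x := by
    intro x
    have := LinearMap.congr_fun hpi x
    simpa using this
  -- `u * h = h`
  have t1 : (1 + (d' - d) * h) * h = h := by
    have e : (1 + (d' - d) * h) * h = h + (d' - d) * (h * h) := by noncomm_ring
    rw [e, hh2, mul_zero, add_zero]
  have uh : u * h = h := by
    calc u * h = u * ((1 + (d' - d) * h) * h) := by rw [t1]
      _ = (u * (1 + (d' - d) * h)) * h := by noncomm_ring
      _ = 1 * h := by rw [hu2]
      _ = h := one_mul h
  -- `(h*u)*(1+δh) = h` and `(1+hδ)*(h*u) = h`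
  have k1 : (h * u) * (1 + (d' - d) * h) = h := by
    calc (h * u) * (1 + (d' - d) * h) = h * (u * (1 + (d' - d) * h)) := by noncomm_ring
      _ = h * 1 := by rw [hu2]
      _ = h := mul_one h
  have k2 : (1 + h * (d' - d)) * (h * u) = h := by
    have e : (1 + h * (d' - d)) * (h * u) = h * ((1 + (d' - d) * h) * u) := by noncomm_ring
    rw [e, hu1, mul_one]
  -- `w * h = h * u`
  have wh_hu : w * h = h * u := by
    calc w * h = w * ((1 + h * (d' - d)) * (h * u)) := by rw [k2]
      _ = (w * (1 + h * (d' - d))) * (h * u) := by noncomm_ring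
      _ = 1 * (h * u) := by rw [hw2]
      _ = h * u := one_mul _
  -- `δ*(h*u) = 1 - u` and `h*(δ*w) = 1 - w`
  have E : (d' - d) * (h * u) = 1 - u := by
    have e : (d' - d) * (h * u) = (1 + (d' - d) * h) * u - u := by noncomm_ring
    rw [e, hu1]
  have G : h * ((d' - d) * w) = 1 - w := by
    have e : h * ((d' - d) * w) = (1 + h * (d' - d)) * w - w := by noncomm_ring
    rw [e, hw1]
  -- `u * w = u + w - 1`
  have uwl : u * w = u + w - 1 := by
    have q : u * w - (u + w - 1) = ((d' - d) * (h * u)) * (h * ((d' - d) * w)) := by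
      rw [E, G]; noncomm_ring
    have q2 : ((d' - d) * (h * u)) * (h * ((d' - d) * w))
        = (d' - d) * ((h * (u * h)) * ((d' - d) * w)) := by noncomm_ring
    rw [q2, uh] at q
    have q3 : (d' - d) * ((h * h) * ((d' - d) * w)) = 0 := by
      rw [hh2, zero_mul, mul_zero]
    rw [q3] at q
    exact sub_eq_zero.mp q
  -- side conditions `p ∘ h = 0` and `h ∘ i = 0`
  have z1 : h * (1 - d * h - h * d) = (0 : Module.End R C) := by
    have e : h * (1 - d * h - h * d) = h - h * d * h - (h * h) * d := by noncomm_ring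
    rw [e, hhdh, hh2, zero_mul, sub_zero, sub_self]
  have hi0 : h ∘ₗ i = 0 := by
    have e1 : h ∘ₗ i = (h * (i ∘ₗ p)) ∘ₗ i := by
      ext x
      simp only [LinearMap.comp_apply, Module.End.mul_apply]
      rw [hpix x]
    rw [e1, hip, z1, LinearMap.zero_comp]
  have z2 : (1 - d * h - h * d) * h = (0 : Module.End R C) := by
    have e : (1 - d * h - h * d) * h = h - d * (h * h) - h * d * h := by noncomm_ring
    rw [e, hh2, mul_zero, sub_zero, hhdh, sub_self]
  have ph0 : p ∘ₗ h = 0 := by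
    have e1 : p ∘ₗ h = p ∘ₗ ((i ∘ₗ p) * h) := by
      ext x
      simp only [LinearMap.comp_apply, Module.End.mul_apply]
      rw [hpix]
    rw [e1, hip, z2, LinearMap.comp_zero]
  have ph0' : ∀ x : C, p (h x) = 0 := by
    intro x
    have := LinearMap.congr_fun ph0 x
    simpa using this
  have hui0' : ∀ x : D, h (u (i x)) = 0 := by
    intro x
    have e : (h * u) ∘ₗ i = w ∘ₗ (h ∘ₗ i) := by
      rw [← wh_hu]
      ext y
      simp only [LinearMap.comp_apply, Module.End.mul_apply]
    have := LinearMap.congr_fun e x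
    simpa [hi0, Module.End.mul_apply] using this
  -- `u ∘ i = i`
  have eu : u = 1 - (d' - d) * (h * u) := by rw [E]; noncomm_ring
  have ui : ∀ x : D, u (i x) = i x := by
    intro x
    conv_lhs => rw [eu]
    simp [hui0' x]
  -- `p ∘ w = p`
  have ew : w = 1 - h * ((d' - d) * w) := by rw [G]; noncomm_ring
  have pw : ∀ x : C, p (w x) = p x := by
    intro x
    conv_lhs => rw [ew]
    simp only [LinearMap.sub_apply, Module.End.one_apply, Module.End.mul_apply]
    rw [map_sub, ph0', sub_zero]
  -- the conjugated homotopy identity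
  have main' : (1 + h * (d' - d)) * (1 - d' * (h * u) - (h * u) * d') * (1 + (d' - d) * h)
      = 1 - d * h - h * d := by
    have expand : (1 + h * (d' - d)) * (1 - d' * (h * u) - (h * u) * d') * (1 + (d' - d) * h)
        = (1 + h * (d' - d)) * (1 + (d' - d) * h)
          - (1 + h * (d' - d)) * d' * ((h * u) * (1 + (d' - d) * h))
          - ((1 + h * (d' - d)) * (h * u)) * (d' * (1 + (d' - d) * h)) := by
      noncomm_ring
    rw [expand, k1, k2]
    have e : (1 + h * (d' - d)) * (1 + (d' - d) * h)
          - (1 + h * (d' - d)) * d' * h - h * (d' * (1 + (d' - d) * h))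
        = 1 - d * h - h * d + h * (d * d) * h - h * (d' * d') * h := by
      noncomm_ring
    rw [e, hd2, hd'2]
    noncomm_ring
  -- MAIN homotopy identity
  have MAIN : w * (1 - d * h - h * d) * u = 1 - d' * (h * u) - (h * u) * d' := by
    have expand : w * (1 - d * h - h * d) * u
        = w * ((1 + h * (d' - d)) * (1 - d' * (h * u) - (h * u) * d') * (1 + (d' - d) * h)) * u := by
      rw [main']
    rw [expand]
    calc w * ((1 + h * (d' - d)) * (1 - d' * (h * u) - (h * u) * d') * (1 + (d' - d) * h)) * u
        = (w * (1 + h * (d' - d))) * ((1 - d' * (h * u) - (h * u) * d') * ((1 + (d' - d) * h) * u)) := by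
          noncomm_ring
      _ = 1 * ((1 - d' * (h * u) - (h * u) * d') * 1) := by rw [hw2, hu1]
      _ = 1 - d' * (h * u) - (h * u) * d' := by noncomm_ring
  refine ⟨?_, ?_, ?_, ?_⟩
  · -- (h*u)² = 0
    calc (h * u) * (h * u) = h * (u * h) * u := by noncomm_ring
      _ = h * h * u := by rw [uh]
      _ = 0 := by rw [hh2, zero_mul]
  · -- (h*u) d' (h*u) = h*u
    calc (h * u) * d' * (h * u) = (w * h) * d' * (h * u) := by rw [wh_hu]
      _ = w * ((h * d * h + h * ((d' - d) * h)) * u) := by noncomm_ring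
      _ = w * ((h + h * ((d' - d) * h)) * u) := by rw [hhdh]
      _ = w * (h * ((1 + (d' - d) * h) * u)) := by noncomm_ring
      _ = w * (h * 1) := by rw [hu1]
      _ = w * h := by rw [mul_one]
      _ = h * u := wh_hu
  · -- p' ∘ i' = id
    ext x
    simp only [LinearMap.comp_apply, LinearMap.id_apply]
    have huw : u (w (i x)) = w (i x) := by
      have e := LinearMap.congr_fun uwl (i x)
      simp only [Module.End.mul_apply, LinearMap.add_apply, LinearMap.sub_apply,
        Module.End.one_apply] at e
      rw [e, ui x]
      abel
    rw [huw, pw (i x), hpix x]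
  · -- i' ∘ p' = 1 - d' h' - h' d'
    have assoc : (w ∘ₗ i) ∘ₗ (p ∘ₗ u) = (w * (i ∘ₗ p)) * u := by
      ext x
      simp only [LinearMap.comp_apply, Module.End.mul_apply]
    rw [assoc, hip]
    exact MAIN
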